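/- Consider the closed-loop stochastic recursion x(k+1) = (A + B K C(k)) x(k) with deterministic initial condition x(0) = x₀ ∈ ℝⁿ, where C(k) = Diag(c₁(k)/p₁, …, cₙ(k)/pₙ) and the family (cᵢ(k))_{k∈ℕ, 1≤i≤n} consists of mutually independent Bernoulli random variables with parameters pᵢ ∈ (0,1]. Let D := A + B K, L := B K, sᵢ := Σ_{k=1}^{n} L_{k,i}², and g(p₁,…,pₙ) := ‖Dᵀ D + Diag(−s₁ + s₁/p₁, …, −sₙ + sₙ/pₙ)‖₂. If g(p₁,…,pₙ) < 1, then E[‖x(k)‖²] ≤ g(p₁,…,pₙ)^k · ‖x₀‖² for all k ∈ ℕ, and in particular the closed-loop system is asymptotically mean-square stable: E[‖x(k)‖²] → 0 as k → ∞ for every initial condition x₀. -/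

import Mathlib

/-!
The gain `A + L C(k)` depends only on the coins tossed at time `k`, whereas the state `x k` is a
function of the coins tossed before `k`; the two are therefore independent, and
`E ‖x (k+1)‖² = E [x kᵀ M x k]` with `M = E [(A + L C(k))ᵀ (A + L C(k))]`. The normalized coins
`cᵢ(k)/pᵢ` have mean `1`, are uncorrelated, and have second moment `1/pᵢ`, which gives
`M = DᵀD + Diag(sᵢ/pᵢ - sᵢ)`. Bounding the quadratic form by the spectral norm yields
`E ‖x (k+1)‖² ≤ g E ‖x k‖²`.
-/

open MeasureTheory ProbabilityTheory Matrix Filter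
open scoped ENNReal

/-- The spectral norm (ℓ²-operator norm) of a real square matrix. -/
noncomputable def specNorm {n : ℕ} (M : Matrix (Fin n) (Fin n) ℝ) : ℝ :=
  ‖LinearMap.toContinuousLinearMap (Matrix.toEuclideanLin M)‖

section LinearAlgebra

variable {ι κ : Type*} [Fintype ι] {n : ℕ}

lemma specNorm_nonneg (M : Matrix (Fin n) (Fin n) ℝ) : 0 ≤ specNorm M :=
  norm_nonneg _

lemma dotProduct_mulVec_le_specNorm_mul (M : Matrix (Fin n) (Fin n) ℝ) (v : Fin n → ℝ) :
    v ⬝ᵥ M *ᵥ v ≤ specNorm M * ∑ i, v i ^ 2 := by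
  set T := LinearMap.toContinuousLinearMap (Matrix.toEuclideanLin M)
  set w : EuclideanSpace ℝ (Fin n) := WithLp.toLp 2 v
  have hTw : T w = WithLp.toLp 2 (M *ᵥ v) := rfl
  have hw : ‖w‖ ^ 2 = ∑ i, v i ^ 2 := EuclideanSpace.real_norm_sq_eq w
  calc v ⬝ᵥ M *ᵥ v = inner ℝ w (T w) := by
        rw [hTw, EuclideanSpace.inner_toLp_toLp, dotProduct_comm]; rfl
    _ ≤ ‖w‖ * ‖T w‖ := real_inner_le_norm _ _
    _ ≤ ‖w‖ * (‖T‖ * ‖w‖) := by gcongr; exact T.le_opNorm w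
    _ = specNorm M * ∑ i, v i ^ 2 := by change _ = ‖T‖ * _; rw [← hw]; ring

lemma dotProduct_mulVec_eq_sum_sum (M : Matrix ι ι ℝ) (v : ι → ℝ) :
    v ⬝ᵥ M *ᵥ v = ∑ j, ∑ l, M j l * (v j * v l) := by
  simp only [dotProduct, mulVec, Finset.mul_sum]
  exact Finset.sum_congr rfl fun j _ => Finset.sum_congr rfl fun l _ => by ring

lemma sum_mulVec_sq_eq [Fintype κ] (M : Matrix κ ι ℝ) (v : ι → ℝ) :
    ∑ i, (M *ᵥ v) i ^ 2 = v ⬝ᵥ (Mᵀ * M) *ᵥ v := by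
  rw [← mulVec_mulVec, dotProduct_mulVec, vecMul_transpose]
  simp only [dotProduct, sq]

lemma add_mul_diagonal_apply [DecidableEq ι] (A L : Matrix κ ι ℝ) (d : ι → ℝ) (i : κ) (j : ι) :
    (A + L * diagonal d) i j = A i j + L i j * d j := by
  rw [Matrix.add_apply, mul_diagonal]

end LinearAlgebra

section MeanSquare

variable {Ω : Type*} {mΩ : MeasurableSpace Ω} {μ : Measure Ω} {n : ℕ}

lemma memLp_mulVec_apply {Φ : Ω → Matrix (Fin n) (Fin n) ℝ} {X : Ω → Fin n → ℝ}
    (hΦ : ∀ i j, MemLp (fun ω => Φ ω i j) ∞ μ) (hX : ∀ i, MemLp (fun ω => X ω i) 2 μ)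
    (i : Fin n) : MemLp (fun ω => (Φ ω *ᵥ X ω) i) 2 μ :=
  memLp_finsetSum Finset.univ fun j _ => (hX j).mul' (hΦ i j)

lemma integral_sum_sum {ι κ : Type*} [Fintype ι] [Fintype κ] {f : ι → κ → Ω → ℝ}
    (hf : ∀ j l, Integrable (f j l) μ) :
    ∫ ω, ∑ j, ∑ l, f j l ω ∂μ = ∑ j, ∑ l, ∫ ω, f j l ω ∂μ := by
  rw [integral_finsetSum _ fun j _ => integrable_finsetSum _ fun l _ => hf j l]
  exact Finset.sum_congr rfl fun j _ => integral_finsetSum _ fun l _ => hf j l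

theorem integral_sum_mulVec_sq_le [IsFiniteMeasure μ] {m₁ m₂ : MeasurableSpace Ω}
    (hind : Indep m₁ m₂ μ) {Φ : Ω → Matrix (Fin n) (Fin n) ℝ} {X : Ω → Fin n → ℝ}
    (hΦm : ∀ i j, Measurable[m₁] fun ω => Φ ω i j) (hΦ : ∀ i j, MemLp (fun ω => Φ ω i j) ∞ μ)
    (hXm : ∀ i, Measurable[m₂] fun ω => X ω i) (hX : ∀ i, MemLp (fun ω => X ω i) 2 μ)
    {G : Matrix (Fin n) (Fin n) ℝ} (hG : ∀ j l, ∫ ω, ((Φ ω)ᵀ * Φ ω) j l ∂μ = G j l) :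
    ∫ ω, ∑ i, (Φ ω *ᵥ X ω) i ^ 2 ∂μ ≤ specNorm G * ∫ ω, ∑ i, X ω i ^ 2 ∂μ := by
  have hNm : ∀ j l, Measurable[m₁] fun ω => ((Φ ω)ᵀ * Φ ω) j l := fun j l =>
    Finset.measurable_fun_sum Finset.univ fun i _ => (hΦm i j).mul (hΦm i l)
  have hN : ∀ j l, Integrable (fun ω => ((Φ ω)ᵀ * Φ ω) j l) μ := fun j l =>
    (memLp_finsetSum Finset.univ fun i _ => (hΦ i l).mul' (hΦ i j)).integrable le_top
  have hXX : ∀ j l, Integrable (fun ω => X ω j * X ω l) μ := fun j l =>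
    (hX j).integrable_mul (hX l)
  have hindNX : ∀ j l,
      IndepFun (fun ω => ((Φ ω)ᵀ * Φ ω) j l) (fun ω => X ω j * X ω l) μ := fun j l =>
    indep_of_indep_of_le_left (indep_of_indep_of_le_right hind ((hXm j).mul (hXm l)).comap_le)
      (hNm j l).comap_le
  have hNXX : ∀ j l, Integrable (fun ω => ((Φ ω)ᵀ * Φ ω) j l * (X ω j * X ω l)) μ := fun j l =>
    (hindNX j l).integrable_mul (hN j l) (hXX j l)
  have hsplit : ∀ j l, ∫ ω, ((Φ ω)ᵀ * Φ ω) j l * (X ω j * X ω l) ∂μ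
      = G j l * ∫ ω, X ω j * X ω l ∂μ := fun j l => by
    rw [(hindNX j l).integral_fun_mul_eq_mul_integral (hN j l).1 (hXX j l).1, hG]
  calc ∫ ω, ∑ i, (Φ ω *ᵥ X ω) i ^ 2 ∂μ
      = ∫ ω, ∑ j, ∑ l, ((Φ ω)ᵀ * Φ ω) j l * (X ω j * X ω l) ∂μ := by
        simp only [sum_mulVec_sq_eq, dotProduct_mulVec_eq_sum_sum]
    _ = ∫ ω, ∑ j, ∑ l, G j l * (X ω j * X ω l) ∂μ := by
        rw [integral_sum_sum hNXX, integral_sum_sum fun j l => (hXX j l).const_mul (G j l)]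
        simp only [hsplit, integral_const_mul]
    _ ≤ ∫ ω, specNorm G * ∑ i, X ω i ^ 2 ∂μ := by
        refine integral_mono (integrable_finsetSum _ fun j _ => integrable_finsetSum _
          fun l _ => (hXX j l).const_mul _)
          ((integrable_finsetSum _ fun i _ => (hX i).integrable_sq).const_mul _) fun ω => ?_
        simpa only [dotProduct_mulVec_eq_sum_sum] using dotProduct_mulVec_le_specNorm_mul G (X ω)
    _ = specNorm G * ∫ ω, ∑ i, X ω i ^ 2 ∂μ := integral_const_mul _ _

theorem integral_sum_sq_le_pow_of_indep [IsProbabilityMeasure μ] (ℱ : Filtration ℕ mΩ)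
    {𝒢 : ℕ → MeasurableSpace Ω} (h𝒢 : ∀ k, 𝒢 k ≤ ℱ (k + 1)) (hind : ∀ k, Indep (𝒢 k) (ℱ k) μ)
    {Φ : ℕ → Ω → Matrix (Fin n) (Fin n) ℝ} (hΦm : ∀ k i j, Measurable[𝒢 k] fun ω => Φ k ω i j)
    (hΦ : ∀ k i j, MemLp (fun ω => Φ k ω i j) ∞ μ) {G : Matrix (Fin n) (Fin n) ℝ}
    (hG : ∀ k j l, ∫ ω, ((Φ k ω)ᵀ * Φ k ω) j l ∂μ = G j l)
    {x₀ : Fin n → ℝ} {x : ℕ → Ω → Fin n → ℝ} (hx0 : ∀ ω, x 0 ω = x₀)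
    (hxrec : ∀ k ω, x (k + 1) ω = Φ k ω *ᵥ x k ω) (k : ℕ) :
    ∫ ω, ∑ i, x k ω i ^ 2 ∂μ ≤ specNorm G ^ k * ∑ i, x₀ i ^ 2 := by
  have hx : ∀ k, (∀ i, Measurable[ℱ k] fun ω => x k ω i) ∧ ∀ i, MemLp (fun ω => x k ω i) 2 μ := by
    intro k
    induction k with
    | zero => simp only [hx0]; exact ⟨fun _ => measurable_const, fun _ => memLp_const _⟩
    | succ k ih =>
      simp only [hxrec]
      refine ⟨fun i => ?_, memLp_mulVec_apply (hΦ k) ih.2⟩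
      simp only [mulVec, dotProduct]
      refine Finset.measurable_fun_sum Finset.univ fun j _ => ?_
      exact ((hΦm k i j).mono (h𝒢 k) le_rfl).mul ((ih.1 j).mono (ℱ.mono k.le_succ) le_rfl)
  induction k with
  | zero => simp [hx0]
  | succ k ih =>
    calc ∫ ω, ∑ i, x (k + 1) ω i ^ 2 ∂μ ≤ specNorm G * ∫ ω, ∑ i, x k ω i ^ 2 ∂μ := by
          simp only [hxrec]
          exact integral_sum_mulVec_sq_le (hind k) (hΦm k) (hΦ k) (hx k).1 (hx k).2 (hG k)
      _ ≤ specNorm G * (specNorm G ^ k * ∑ i, x₀ i ^ 2) := by gcongr; exact specNorm_nonneg G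
      _ = specNorm G ^ (k + 1) * ∑ i, x₀ i ^ 2 := by ring

end MeanSquare

section SecondMoment

variable {Ω : Type*} {mΩ : MeasurableSpace Ω} {μ : Measure Ω} {n : ℕ}

lemma measurable_add_mul_diagonal_apply {m : MeasurableSpace Ω} (A L : Matrix (Fin n) (Fin n) ℝ)
    {d : Fin n → Ω → ℝ} (hd : ∀ j, Measurable[m] (d j)) (i j : Fin n) :
    Measurable[m] fun ω => (A + L * diagonal fun i => d i ω) i j := by
  simp only [add_mul_diagonal_apply]
  exact measurable_const.add (measurable_const.mul (hd j))

lemma memLp_top_add_mul_diagonal_apply (A L : Matrix (Fin n) (Fin n) ℝ) {d : Fin n → Ω → ℝ}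
    (hd : ∀ j, MemLp (d j) ∞ μ) (i j : Fin n) :
    MemLp (fun ω => (A + L * diagonal fun i => d i ω) i j) ∞ μ := by
  simp only [add_mul_diagonal_apply]
  exact (memLp_top_const (A i j)).add ((hd j).const_mul (L i j))

theorem integral_transpose_mul_self_add_mul_diagonal [IsProbabilityMeasure μ]
    (A L : Matrix (Fin n) (Fin n) ℝ) {d : Fin n → Ω → ℝ} {v : Fin n → ℝ}
    (hd : ∀ j, MemLp (d j) 2 μ) (hd1 : ∀ j, ∫ ω, d j ω ∂μ = 1)
    (hd2 : ∀ j l, ∫ ω, d j ω * d l ω ∂μ = if j = l then v j else 1) (j l : Fin n) :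
    ∫ ω, ((A + L * diagonal fun i => d i ω)ᵀ * (A + L * diagonal fun i => d i ω)) j l ∂μ
      = ((A + L)ᵀ * (A + L) + diagonal fun i => (v i - 1) * ∑ k, L k i ^ 2) j l := by
  have hint1 : ∀ j, Integrable (d j) μ := fun j => (hd j).integrable one_le_two
  have hint2 : ∀ j l, Integrable (fun ω => d j ω * d l ω) μ := fun j l =>
    (hd j).integrable_mul (hd l)
  have hentry : ∀ ω, ((A + L * diagonal fun i => d i ω)ᵀ * (A + L * diagonal fun i => d i ω)) j l
      = ∑ i, (A i j * A i l + A i j * L i l * d l ω + L i j * A i l * d j ω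
        + L i j * L i l * (d j ω * d l ω)) := by
    intro ω
    simp only [mul_apply, transpose_apply, add_mul_diagonal_apply]
    exact Finset.sum_congr rfl fun i _ => by ring
  have hterm : ∀ i, ∫ ω, (A i j * A i l + A i j * L i l * d l ω + L i j * A i l * d j ω
      + L i j * L i l * (d j ω * d l ω)) ∂μ = A i j * A i l + A i j * L i l + L i j * A i l
        + L i j * L i l * (if j = l then v j else 1) := by
    intro i
    rw [integral_add, integral_add, integral_add, integral_const, integral_const_mul,
      integral_const_mul, integral_const_mul, hd1, hd1, hd2]
    · simp
    all_goals fun_prop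
  rw [integral_congr_ae (ae_of_all μ hentry), integral_finsetSum _ fun i _ => by fun_prop]
  simp only [hterm, Matrix.add_apply, mul_apply, transpose_apply, diagonal_apply]
  split_ifs with hjl
  · subst hjl
    rw [Finset.mul_sum, ← Finset.sum_add_distrib]
    exact Finset.sum_congr rfl fun i _ => by ring
  · simp only [add_zero]
    exact Finset.sum_congr rfl fun i _ => by ring

end SecondMoment

section Coins

variable {Ω : Type*} {mΩ : MeasurableSpace Ω} {μ : Measure Ω}

lemma integral_eq_of_eq_zero_or_one {f : Ω → ℝ} (hf : Measurable f)
    (h01 : ∀ ω, f ω = 0 ∨ f ω = 1) {q : ℝ} (hq : 0 ≤ q)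
    (hμ : μ {ω | f ω = 1} = ENNReal.ofReal q) : ∫ ω, f ω ∂μ = q := by
  have hf_eq : f = Set.indicator {ω | f ω = 1} 1 := by
    funext ω
    rcases h01 ω with h | h <;> simp [Set.indicator, h]
  have hs : MeasurableSet {ω | f ω = 1} := hf (measurableSet_singleton 1)
  rw [hf_eq, integral_indicator_one hs, measureReal_def, hμ, ENNReal.toReal_ofReal hq]

lemma integral_div_eq_one_of_eq_zero_or_one {f : Ω → ℝ} (hf : Measurable f)
    (h01 : ∀ ω, f ω = 0 ∨ f ω = 1) {q : ℝ} (hq : 0 < q)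
    (hμ : μ {ω | f ω = 1} = ENNReal.ofReal q) : ∫ ω, f ω / q ∂μ = 1 := by
  rw [integral_div, integral_eq_of_eq_zero_or_one hf h01 hq.le hμ, div_self hq.ne']

lemma memLp_top_of_eq_zero_or_one {f : Ω → ℝ} (hf : AEStronglyMeasurable f μ)
    (h01 : ∀ ω, f ω = 0 ∨ f ω = 1) : MemLp f ∞ μ :=
  memLp_top_of_bound hf 1 (ae_of_all μ fun ω => by rcases h01 ω with h | h <;> simp [h])

variable {ι : Type*}

abbrev coinSigma (c : ℕ → ι → Ω → ℝ) (T : Set ℕ) : MeasurableSpace Ω :=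
  ⨆ ti ∈ {ti : ℕ × ι | ti.1 ∈ T}, MeasurableSpace.comap (c ti.1 ti.2) inferInstance

lemma coinSigma_mono (c : ℕ → ι → Ω → ℝ) {T T' : Set ℕ} (h : T ⊆ T') :
    coinSigma c T ≤ coinSigma c T' :=
  biSup_mono fun _ hti => h hti

lemma coinSigma_le {c : ℕ → ι → Ω → ℝ} (hc : ∀ t i, Measurable (c t i)) (T : Set ℕ) :
    coinSigma c T ≤ mΩ :=
  iSup₂_le fun ti _ => (hc ti.1 ti.2).comap_le

lemma measurable_coinSigma (c : ℕ → ι → Ω → ℝ) {T : Set ℕ} {t : ℕ} (ht : t ∈ T) (i : ι) :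
    Measurable[coinSigma c T] (c t i) :=
  Measurable.of_comap_le (le_iSup₂_of_le (t, i) ht le_rfl)

lemma indep_coinSigma {c : ℕ → ι → Ω → ℝ} (hc : ∀ t i, Measurable (c t i))
    (hindep : iIndepFun (fun (ti : ℕ × ι) ω => c ti.1 ti.2 ω) μ) {T T' : Set ℕ}
    (hT : Disjoint T T') : Indep (coinSigma c T) (coinSigma c T') μ :=
  indep_iSup_of_disjoint (m := fun ti : ℕ × ι => MeasurableSpace.comap (c ti.1 ti.2) inferInstance)
    (fun ti => (hc ti.1 ti.2).comap_le) hindep.iIndep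
    (Set.disjoint_left.2 fun _ h h' => Set.disjoint_left.1 hT h h')

def coinFiltration {c : ℕ → ι → Ω → ℝ} (hc : ∀ t i, Measurable (c t i)) :
    Filtration ℕ mΩ where
  seq k := coinSigma c (Set.Iio k)
  mono' _ _ h := coinSigma_mono c (Set.Iio_subset_Iio h)
  le' _ := coinSigma_le hc _

variable {c : ℕ → ι → Ω → ℝ} {p : ι → ℝ}

lemma memLp_top_coin_div (hc : ∀ t i, Measurable (c t i))
    (h01 : ∀ t i ω, c t i ω = 0 ∨ c t i ω = 1) (t : ℕ) (j : ι) :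
    MemLp (fun ω => c t j ω / p j) ∞ μ := by
  simpa only [div_eq_mul_inv] using
    (memLp_top_of_eq_zero_or_one (hc t j).aestronglyMeasurable (h01 t j)).mul_const (p j)⁻¹

lemma integral_coin_div_mul_coin_div [DecidableEq ι] (hc : ∀ t i, Measurable (c t i))
    (h01 : ∀ t i ω, c t i ω = 0 ∨ c t i ω = 1)
    (hber : ∀ t i, μ {ω | c t i ω = 1} = ENNReal.ofReal (p i))
    (hindep : iIndepFun (fun (ti : ℕ × ι) ω => c ti.1 ti.2 ω) μ) (hp : ∀ i, 0 < p i)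
    (t : ℕ) (j l : ι) :
    ∫ ω, c t j ω / p j * (c t l ω / p l) ∂μ = if j = l then 1 / p j else 1 := by
  split_ifs with hjl
  · subst hjl
    have hsq : ∀ ω, c t j ω / p j * (c t j ω / p j) = c t j ω / p j / p j := fun ω => by
      rcases h01 t j ω with h | h <;> simp [h, div_eq_mul_inv]
    simp_rw [hsq]
    rw [integral_div, integral_div_eq_one_of_eq_zero_or_one (hc t j) (h01 t j) (hp j) (hber t j)]
  · have hI : IndepFun (fun ω => c t j ω / p j) (fun ω => c t l ω / p l) μ :=
      (hindep.indepFun (i := (t, j)) (j := (t, l)) (by simp [hjl])).comp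
        (measurable_id.div_const (p j)) (measurable_id.div_const (p l))
    rw [hI.integral_fun_mul_eq_mul_integral ((hc t j).div_const _).aestronglyMeasurable
      ((hc t l).div_const _).aestronglyMeasurable]
    simp only [integral_div_eq_one_of_eq_zero_or_one (hc t _) (h01 t _) (hp _) (hber t _), one_mul]

end Coins

/-- For the closed-loop stochastic recursion
`x(k+1) = (A + B K C(k)) x(k)` with `C(k) = Diag(c₁(k)/p₁, …, cₙ(k)/pₙ)` built from
mutually independent Bernoulli random variables with parameters `pᵢ ∈ (0,1]`, with
`D := A + B K`, `L := B K`, `sᵢ := Σₖ L_{k,i}²` and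
`g(p₁,…,pₙ) := ‖Dᵀ D + Diag(−s₁ + s₁/p₁, …, −sₙ + sₙ/pₙ)‖₂`: if `g(p₁,…,pₙ) < 1` then
`E[‖x(k)‖²] ≤ g(p₁,…,pₙ)^k · ‖x₀‖²` for all `k`, and `E[‖x(k)‖²] → 0` (AMSS). -/
theorem amss_of_g_lt_one
    {n m : ℕ} (A : Matrix (Fin n) (Fin n) ℝ) (B : Matrix (Fin n) (Fin m) ℝ)
    (K : Matrix (Fin m) (Fin n) ℝ)
    {Ω : Type*} [MeasurableSpace Ω] (μ : Measure Ω) [IsProbabilityMeasure μ]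
    (p : Fin n → ℝ) (hp : ∀ i, p i ∈ Set.Ioc (0 : ℝ) 1)
    (c : ℕ → Fin n → Ω → ℝ)
    (hmeas : ∀ k i, Measurable (c k i))
    (h01 : ∀ k i ω, c k i ω = 0 ∨ c k i ω = 1)
    (hber : ∀ k i, μ {ω | c k i ω = 1} = ENNReal.ofReal (p i))
    (hindep : iIndepFun
      (fun (ki : ℕ × Fin n) ω => c ki.1 ki.2 ω) μ)
    (hg : specNorm ((A + B * K)ᵀ * (A + B * K) + Matrix.diagonal
        (fun i => -(∑ j, ((B * K) j i) ^ 2) + (∑ j, ((B * K) j i) ^ 2) / p i)) < 1)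
    (x₀ : Fin n → ℝ) (x : ℕ → Ω → Fin n → ℝ)
    (hx0 : ∀ ω, x 0 ω = x₀)
    (hxrec : ∀ k ω, x (k + 1) ω =
      (A + B * K * Matrix.diagonal (fun i => c k i ω / p i)).mulVec (x k ω)) :
    (∀ k, (∫ ω, ∑ i, (x k ω i) ^ 2 ∂μ) ≤
        specNorm ((A + B * K)ᵀ * (A + B * K) + Matrix.diagonal
          (fun i => -(∑ j, ((B * K) j i) ^ 2) + (∑ j, ((B * K) j i) ^ 2) / p i)) ^ k *
          ∑ i, (x₀ i) ^ 2) ∧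
      Tendsto (fun k => ∫ ω, ∑ i, (x k ω i) ^ 2 ∂μ) atTop (nhds 0) := by
  have hp0 : ∀ i, 0 < p i := fun i => (hp i).1
  have hmoment : ∀ k j l, ∫ ω, ((A + B * K * diagonal fun i => c k i ω / p i)ᵀ *
      (A + B * K * diagonal fun i => c k i ω / p i)) j l ∂μ
      = ((A + B * K)ᵀ * (A + B * K) + diagonal
        (fun i => -(∑ j, ((B * K) j i) ^ 2) + (∑ j, ((B * K) j i) ^ 2) / p i)) j l := by
    intro k j l
    have hdiag : (fun i => (1 / p i - 1) * ∑ j, (B * K) j i ^ 2)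
        = fun i => -(∑ j, ((B * K) j i) ^ 2) + (∑ j, ((B * K) j i) ^ 2) / p i :=
      funext fun i => by ring
    rw [integral_transpose_mul_self_add_mul_diagonal A (B * K)
      (fun j => (memLp_top_coin_div hmeas h01 k j).mono_exponent le_top)
      (fun j => integral_div_eq_one_of_eq_zero_or_one (hmeas k j) (h01 k j) (hp0 j) (hber k j))
      (integral_coin_div_mul_coin_div hmeas h01 hber hindep hp0 k), hdiag]
  have hbound := integral_sum_sq_le_pow_of_indep (coinFiltration hmeas)
    (𝒢 := fun k => coinSigma c {k}) (fun k => coinSigma_mono c (by simp))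
    (fun k => indep_coinSigma hmeas hindep (by simp))
    (fun k => measurable_add_mul_diagonal_apply A (B * K) fun j =>
      (measurable_coinSigma c (Set.mem_singleton k) j).div_const (p j))
    (fun k => memLp_top_add_mul_diagonal_apply A (B * K) (memLp_top_coin_div hmeas h01 k))
    hmoment hx0 hxrec
  refine ⟨hbound, squeeze_zero (fun k => integral_nonneg fun ω => by positivity) hbound ?_⟩
  simpa using (tendsto_pow_atTop_nhds_zero_of_lt_one (specNorm_nonneg _) hg).mul_const
    (∑ i, x₀ i ^ 2)
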